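/- Let α be a nonnegative random variable with finite expectation and continuous CDF F which is DMRL, let T ≥ 0, c ≥ 0, k = 3T + c, r_H = α_H − k with r_H > 0, and let r* be the unique solution in (0, r_H) of r = m(k + r). Then the conditional probability of no transaction satisfies (F(r* + k) − F(k))/(1 − F(k)) ≤ 1 − e^{−1}. Moreover this bound is tight over DMRL distributions: if α is exponential with rate λ > 0, then r* = 1/λ and (F(r* + k) − F(k))/(1 − F(k)) = 1 − e^{−1} for every T, c ≥ 0. -/

import Mathlib

/-!
Write `S(t) = P(α > t)` and `G(t) = E[(α - t)⁺]`, so that `m = G / S` and, since `α` has no atoms,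
`G' = -S`. Under DMRL the fixed point `r = m(k + r)` gives `m ≥ r` on `[k, k + r]`, that is
`G' ≥ -G / r`, and Grönwall's inequality yields `G(k) ≤ e G(k + r)`. Together with
`r S(k) ≤ G(k)` and `G(k + r) = r S(k + r)` this gives `S(k + r) ≥ e⁻¹ S(k)`, which is the bound.
For the exponential law the layer-cake formula gives `G(t) = e^{-λt} / λ = S(t) / λ`, so `m ≡ 1/λ`
and the bound is attained.
-/

open MeasureTheory Set

/-- The cumulative distribution function of a distribution `μ` on `ℝ`. -/
noncomputable def cdfR (μ : Measure ℝ) (t : ℝ) : ℝ := (μ (Iic t)).toReal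

/-- The mean residual lifetime function `m(t) = E[α − t ∣ α > t]` (with value `0` when
`P(α > t) = 0`, using the junk-value convention `x / 0 = 0`). -/
noncomputable def mrl (μ : Measure ℝ) (t : ℝ) : ℝ :=
  (∫ x, max (x - t) 0 ∂μ) / (μ (Ioi t)).toReal

open Filter Real

noncomputable def stopLoss (μ : Measure ℝ) (t : ℝ) : ℝ := ∫ x, max (x - t) 0 ∂μ

lemma mrl_eq_stopLoss_div (μ : Measure ℝ) (t : ℝ) : mrl μ t = stopLoss μ t / μ.real (Ioi t) :=
  rfl

lemma stopLoss_nonneg (μ : Measure ℝ) (t : ℝ) : 0 ≤ stopLoss μ t :=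
  integral_nonneg fun _ => le_max_right _ _

lemma cdfR_eq_one_sub_measureReal_Ioi (μ : Measure ℝ) [IsProbabilityMeasure μ] (t : ℝ) :
    cdfR μ t = 1 - μ.real (Ioi t) := by
  rw [← probReal_compl_eq_one_sub measurableSet_Ioi, compl_Ioi]
  rfl

lemma mul_measureReal_Ioi_le_stopLoss {μ : Measure ℝ} {r t : ℝ} (h : r ≤ mrl μ t) :
    r * μ.real (Ioi t) ≤ stopLoss μ t := by
  rcases (measureReal_nonneg : 0 ≤ μ.real (Ioi t)).eq_or_lt with h0 | hpos
  · rw [← h0, mul_zero]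
    exact stopLoss_nonneg μ t
  · rwa [mrl_eq_stopLoss_div, le_div_iff₀ hpos] at h

lemma measureReal_Ioi_pos_of_mrl_pos {μ : Measure ℝ} {t : ℝ} (h : 0 < mrl μ t) :
    0 < μ.real (Ioi t) := by
  refine measureReal_nonneg.lt_of_ne fun h0 => h.ne' ?_
  rw [mrl_eq_stopLoss_div, ← h0, div_zero]

lemma stopLoss_eq_mrl_mul {μ : Measure ℝ} {t : ℝ} (h : 0 < mrl μ t) :
    stopLoss μ t = mrl μ t * μ.real (Ioi t) := by
  rw [mrl_eq_stopLoss_div, div_mul_cancel₀ _ (measureReal_Ioi_pos_of_mrl_pos h).ne']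

lemma hasDerivAt_max_sub_zero {x t : ℝ} (h : x ≠ t) :
    HasDerivAt (fun s => max (x - s) 0) (-(Ioi t).indicator 1 x) t := by
  rcases h.lt_or_gt with hxt | htx
  · have hzero : (fun _ : ℝ => (0 : ℝ)) =ᶠ[nhds t] fun s => max (x - s) 0 :=
      eventually_of_mem (Ioi_mem_nhds hxt) fun s hs =>
        (max_eq_right (by linarith [mem_Ioi.1 hs])).symm
    simpa [indicator_of_notMem (notMem_Ioi.2 hxt.le)] using
      (hasDerivAt_const t (0 : ℝ)).congr_of_eventuallyEq hzero.symm
  · have hlin : (fun s => x - s) =ᶠ[nhds t] fun s => max (x - s) 0 :=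
      eventually_of_mem (Iio_mem_nhds htx) fun s hs =>
        (max_eq_left (by linarith [mem_Iio.1 hs])).symm
    simpa [indicator_of_mem (mem_Ioi.2 htx)] using
      ((hasDerivAt_id t).const_sub x).congr_of_eventuallyEq hlin.symm

/-- Without atoms, `s ↦ (x - s)⁺` is differentiable at `t` for almost every `x`, so the derivative
passes under the integral. -/
theorem hasDerivAt_stopLoss {μ : Measure ℝ} [IsFiniteMeasure μ] (hint : Integrable id μ)
    (hcont : ∀ t : ℝ, μ {t} = 0) (t : ℝ) :
    HasDerivAt (stopLoss μ) (-μ.real (Ioi t)) t := by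
  have hlip : ∀ x : ℝ, LipschitzWith 1 fun s : ℝ => max (x - s) 0 := fun x =>
    (LipschitzWith.of_dist_le_mul fun a b => by
      rw [NNReal.coe_one, one_mul, Real.dist_eq, Real.dist_eq, abs_sub_comm a b,
        sub_sub_sub_cancel_left]).max_const 0
  have hdiff : ∀ᵐ x ∂μ, HasDerivAt (fun s => max (x - s) 0) (-(Ioi t).indicator 1 x) t :=
    (measure_eq_zero_iff_ae_notMem.1 (hcont t)).mono fun x hx => hasDerivAt_max_sub_zero hx
  have key := hasDerivAt_integral_of_dominated_loc_of_lip (F := fun s x => max (x - s) 0)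
    (F' := fun x => -(Ioi t).indicator 1 x) (bound := fun _ => 1) univ_mem
    (Eventually.of_forall fun s =>
      (by fun_prop : Continuous fun x : ℝ => max (x - s) 0).aestronglyMeasurable)
    (hint.sub (integrable_const t)).pos_part
    ((measurable_const.indicator measurableSet_Ioi).neg.aestronglyMeasurable)
    (ae_of_all _ fun x => by simpa using (hlip x).lipschitzOnWith (s := univ))
    (integrable_const 1) hdiff
  rw [integral_neg, integral_indicator_one measurableSet_Ioi] at key
  exact key.2

theorem mul_exp_neg_div_le_of_hasDerivAt {G S : ℝ → ℝ} {a b r : ℝ} (hr : 0 < r) (hab : a ≤ b)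
    (hG : ∀ t ∈ Icc a b, HasDerivAt G (-S t) t) (hS : ∀ t ∈ Ico a b, r * S t ≤ G t) :
    G a * exp (-(b - a) / r) ≤ G b := by
  have key := le_gronwallBound_of_liminf_deriv_right_le (f := fun t => -G t) (f' := S)
    (δ := -G a) (K := -r⁻¹) (ε := 0)
    (fun t ht => (hG t ht).continuousAt.continuousWithinAt.neg)
    (fun t ht _ hlt => (hG t (Ico_subset_Icc_self ht)).neg.hasDerivWithinAt.liminf_right_slope_le
      (by rwa [neg_neg]))
    le_rfl
    (fun t ht => by
      rw [neg_mul_neg, add_zero, inv_mul_eq_div, le_div_iff₀ hr, mul_comm]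
      exact hS t ht)
    b ⟨hab, le_rfl⟩
  rw [gronwallBound_ε0, show -r⁻¹ * (b - a) = -(b - a) / r by ring] at key
  linarith

theorem exp_neg_one_mul_measureReal_Ioi_le {μ : Measure ℝ} [IsFiniteMeasure μ]
    (hint : Integrable id μ) (hcont : ∀ t : ℝ, μ {t} = 0) (hdmrl : Antitone (mrl μ)) {k r : ℝ}
    (hr : 0 < r) (hfix : r = mrl μ (k + r)) :
    exp (-1) * μ.real (Ioi k) ≤ μ.real (Ioi (k + r)) := by
  have hbound : ∀ t ∈ Ico k (k + r), r * μ.real (Ioi t) ≤ stopLoss μ t := fun t ht =>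
    mul_measureReal_Ioi_le_stopLoss (hfix.trans_le (hdmrl ht.2.le))
  have hgron := mul_exp_neg_div_le_of_hasDerivAt hr (le_add_of_nonneg_right hr.le)
    (fun t _ => hasDerivAt_stopLoss hint hcont t) hbound
  have hend : stopLoss μ (k + r) = r * μ.real (Ioi (k + r)) := by
    rw [stopLoss_eq_mrl_mul (hfix ▸ hr), ← hfix]
  rw [add_sub_cancel_left, neg_div, div_self hr.ne', hend] at hgron
  have hstart := hbound k ⟨le_rfl, lt_add_of_pos_right k hr⟩
  nlinarith [exp_pos (-1)]

lemma stopLoss_eq_toReal_lintegral (μ : Measure ℝ) (t : ℝ) :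
    stopLoss μ t = (∫⁻ s in Ioi 0, μ (Ioi (t + s))).toReal := by
  have hlayer := lintegral_eq_lintegral_meas_lt μ (f := fun x => max (x - t) 0)
    (ae_of_all _ fun _ => le_max_right _ _) (by fun_prop)
  have hlevel : ∀ s ∈ Ioi (0 : ℝ), μ {x | s < max (x - t) 0} = μ (Ioi (t + s)) := fun s hs => by
    congr 1
    ext x
    change s < max (x - t) 0 ↔ t + s < x
    rw [lt_max_iff, or_iff_left (not_lt.2 (le_of_lt hs)), lt_sub_iff_add_lt']
  rw [stopLoss, integral_eq_lintegral_of_nonneg_ae (f := fun x => max (x - t) 0)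
    (ae_of_all _ fun _ => le_max_right _ _) (by fun_prop), hlayer,
    setLIntegral_congr_fun measurableSet_Ioi hlevel]

lemma measureReal_Ioi_eq_exp_of_cdf {ν : Measure ℝ} [IsProbabilityMeasure ν] {l : ℝ}
    (hcdf : ∀ x : ℝ, 0 ≤ x → (ν (Iic x)).toReal = 1 - exp (-(l * x))) {u : ℝ} (hu : 0 ≤ u) :
    ν.real (Ioi u) = exp (-(l * u)) := by
  have h := cdfR_eq_one_sub_measureReal_Ioi ν u
  rw [cdfR, hcdf u hu] at h
  linarith

lemma stopLoss_eq_of_measureReal_Ioi_eq_exp {ν : Measure ℝ} [IsFiniteMeasure ν] {l : ℝ} (hl : 0 < l)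
    (htail : ∀ u : ℝ, 0 ≤ u → ν.real (Ioi u) = exp (-(l * u))) {t : ℝ} (ht : 0 ≤ t) :
    stopLoss ν t = exp (-(l * t)) / l := by
  have hneg : -l < 0 := neg_lt_zero.2 hl
  have hshift : ∀ s ∈ Ioi (0 : ℝ),
      ν (Ioi (t + s)) = ENNReal.ofReal (exp (-(l * t)) * exp (-l * s)) := fun s hs => by
    rw [← ofReal_measureReal, htail _ (by linarith [mem_Ioi.1 hs]), ← exp_add]
    ring_nf
  rw [stopLoss_eq_toReal_lintegral, setLIntegral_congr_fun measurableSet_Ioi hshift,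
    ← ofReal_integral_eq_lintegral_ofReal ((integrableOn_exp_mul_Ioi hneg 0).const_mul _)
      (ae_of_all _ fun _ => by positivity),
    integral_const_mul, integral_exp_mul_Ioi hneg, mul_zero, exp_zero, neg_div_neg_eq,
    ENNReal.toReal_ofReal (by positivity)]
  ring

lemma mrl_eq_of_measureReal_Ioi_eq_exp {ν : Measure ℝ} [IsFiniteMeasure ν] {l : ℝ} (hl : 0 < l)
    (htail : ∀ u : ℝ, 0 ≤ u → ν.real (Ioi u) = exp (-(l * u))) {t : ℝ} (ht : 0 ≤ t) :
    mrl ν t = 1 / l := by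
  rw [mrl_eq_stopLoss_div, stopLoss_eq_of_measureReal_Ioi_eq_exp hl htail ht, htail t ht]
  field_simp

theorem stmt17_general (μ : Measure ℝ) [IsProbabilityMeasure μ]
    (hint : Integrable id μ) (hcont : ∀ t : ℝ, μ {t} = 0)
    (hdmrl : Antitone (mrl μ))
    (k : ℝ)
    (rstar : ℝ) (hr1 : 0 < rstar)
    (hfix : rstar = mrl μ (k + rstar)) :
    (cdfR μ (rstar + k) - cdfR μ k) / (1 - cdfR μ k) ≤ 1 - Real.exp (-1) ∧
    (∀ ν : Measure ℝ, IsProbabilityMeasure ν → ∀ l : ℝ, 0 < l →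
      ν (Iio 0) = 0 → (∀ x : ℝ, 0 ≤ x → (ν (Iic x)).toReal = 1 - Real.exp (-(l * x))) →
      ∀ T' c' : ℝ, 0 ≤ T' → 0 ≤ c' →
        (1/l) = mrl ν ((3*T' + c') + 1/l) ∧
        (∀ r : ℝ, 0 < r → r = mrl ν ((3*T' + c') + r) → r = 1/l) ∧
        (cdfR ν (1/l + (3*T' + c')) - cdfR ν (3*T' + c')) / (1 - cdfR ν (3*T' + c')) =
          1 - Real.exp (-1)) := by
  refine ⟨?_, fun ν _ l hl _ hcdf T' c' hT' hc' => ?_⟩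
  · have hkey := exp_neg_one_mul_measureReal_Ioi_le hint hcont hdmrl hr1 hfix
    have hend : 0 < μ.real (Ioi (k + rstar)) := measureReal_Ioi_pos_of_mrl_pos (hfix ▸ hr1)
    have hstart : 0 < μ.real (Ioi k) :=
      hend.trans_le (measureReal_mono (Ioi_subset_Ioi (le_add_of_nonneg_right hr1.le)))
    rw [cdfR_eq_one_sub_measureReal_Ioi, cdfR_eq_one_sub_measureReal_Ioi, add_comm rstar k,
      sub_sub_cancel, div_le_iff₀ hstart]
    linarith
  · have htail := fun u (hu : 0 ≤ u) => measureReal_Ioi_eq_exp_of_cdf hcdf hu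
    have hk : 0 ≤ 3 * T' + c' := by positivity
    have hmrl : ∀ r, 0 ≤ r → mrl ν ((3 * T' + c') + r) = 1 / l := fun r hr =>
      mrl_eq_of_measureReal_Ioi_eq_exp hl htail (by positivity)
    refine ⟨(hmrl _ (by positivity)).symm, fun r hr hr_fix => hr_fix.trans (hmrl r hr.le), ?_⟩
    rw [cdfR_eq_one_sub_measureReal_Ioi, cdfR_eq_one_sub_measureReal_Ioi, sub_sub_cancel,
      htail _ (by positivity), htail _ hk, mul_add, mul_one_div_cancel hl.ne', neg_add, exp_add]
    field_simp
    ring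

/-- For any DMRL distribution, the conditional probability of no transaction
`(F(r* + k) − F(k))/(1 − F(k))` is at most `1 − e⁻¹`; the bound is tight: for the
exponential distribution with rate `λ > 0` (characterized by its CDF `1 − e^{−λx}`), the
equilibrium margin is `r* = 1/λ` and the conditional probability equals `1 − e⁻¹` for all
`T, c ≥ 0`. -/
theorem stmt17 (μ : Measure ℝ) [IsProbabilityMeasure μ]
    (hnonneg : μ (Iio 0) = 0) (hint : Integrable id μ) (hcont : ∀ t : ℝ, μ {t} = 0)
    (hdmrl : Antitone (mrl μ))
    (T c : ℝ) (hT : 0 ≤ T) (hc : 0 ≤ c) (k : ℝ) (hk : k = 3*T + c)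
    (rH : EReal) (hrH : rH = essSup (fun x : ℝ => (x : EReal)) μ - (k : EReal))
    (hrHpos : 0 < rH)
    (rstar : ℝ) (hr1 : 0 < rstar) (hr2 : (rstar : EReal) < rH)
    (hfix : rstar = mrl μ (k + rstar)) :
    (cdfR μ (rstar + k) - cdfR μ k) / (1 - cdfR μ k) ≤ 1 - Real.exp (-1) ∧
    (∀ ν : Measure ℝ, IsProbabilityMeasure ν → ∀ l : ℝ, 0 < l →
      ν (Iio 0) = 0 → (∀ x : ℝ, 0 ≤ x → (ν (Iic x)).toReal = 1 - Real.exp (-(l * x))) →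
      ∀ T' c' : ℝ, 0 ≤ T' → 0 ≤ c' →
        (1/l) = mrl ν ((3*T' + c') + 1/l) ∧
        (∀ r : ℝ, 0 < r → r = mrl ν ((3*T' + c') + r) → r = 1/l) ∧
        (cdfR ν (1/l + (3*T' + c')) - cdfR ν (3*T' + c')) / (1 - cdfR ν (3*T' + c')) =
          1 - Real.exp (-1)) :=
  stmt17_general μ hint hcont hdmrl k rstar hr1 hfix
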